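/- arXiv:1909.03255 — 5 statements merged into one kernel-verified Lean document; each statement's English description precedes it below -/
import Mathlib

section
/- Let F be a finite field. With probability 1−o(1) (as |F| → ∞), a uniformly random function λ : F → F has relative Hamming distance greater than 1/3 from every polynomial over F of degree at most |F|/2. -/
/-!
A union bound. There are at most `q ^ (q/2 + 1)` polynomial functions of degree at most `q/2`
on a field with `q` elements, and a Hamming ball of radius `q/3` in `F → F` has at most
`C(q, q/3) q ^ (q/3) ≤ 2 ^ q q ^ (q/3)` points. So at most `2 ^ q q ^ (5q/6 + 1)` of the `q ^ q`
functions lie within distance `q/3` of such a polynomial. Since `q ^ (q/6)` dominates `4 ^ q · q`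
once `q ≥ 2 ^ 42`, that is a fraction of at most `2 ^ 35 / 2 ^ q`.
-/

open Finset Polynomial

open scoped Classical

section HammingBall

variable {α β : Type*} [Fintype α] [DecidableEq α] [Fintype β] [DecidableEq β]

theorem card_filter_forall_notMem_eq_le (f : α → β) (S : Finset α) :
    #{g : α → β | ∀ x ∉ S, g x = f x} ≤ Fintype.card β ^ #S := by
  have hinj := card_le_card_of_injOn (s := ({g | ∀ x ∉ S, g x = f x} : Finset (α → β)))
    (t := (univ : Finset (S → β)))
    (fun (g : α → β) (x : S) => g x) (fun _ _ => mem_univ _) <| by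
      intro g hg g' hg' hgg'
      funext x
      by_cases hx : x ∈ S
      · exact congrFun hgg' ⟨x, hx⟩
      · rw [(mem_filter.1 hg).2 x hx, (mem_filter.1 hg').2 x hx]
  simpa [Fintype.card_fun] using hinj

theorem card_hammingDist_le_le (f : α → β) {r : ℕ} (hr : r ≤ Fintype.card α) :
    #{g : α → β | hammingDist g f ≤ r} ≤ (Fintype.card α).choose r * Fintype.card β ^ r := by
  have hcover : ({g : α → β | hammingDist g f ≤ r} : Finset _) ⊆
      (powersetCard r univ).biUnion fun S => {g : α → β | ∀ x ∉ S, g x = f x} := by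
    intro g hg
    obtain ⟨S, hdiff, hScard⟩ := exists_superset_card_eq (mem_filter.1 hg).2 hr
    refine mem_biUnion.2 ⟨S, mem_powersetCard_univ.2 hScard, mem_filter.2 ⟨mem_univ _, ?_⟩⟩
    intro x hx
    by_contra hne
    exact hx (hdiff (by simp [hne]))
  calc #{g : α → β | hammingDist g f ≤ r}
      ≤ ∑ S ∈ powersetCard r univ, #{g : α → β | ∀ x ∉ S, g x = f x} :=
        (card_le_card hcover).trans card_biUnion_le
    _ ≤ #(powersetCard r (univ : Finset α)) • Fintype.card β ^ r :=
        sum_le_card_nsmul _ _ _ fun S hS =>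
          (mem_powersetCard_univ.1 hS ▸ card_filter_forall_notMem_eq_le f S)
    _ = (Fintype.card α).choose r * Fintype.card β ^ r := by
        rw [smul_eq_mul, card_powersetCard, card_univ]

end HammingBall

section PolynomialFunctions

variable (R : Type*) [Semiring R] [Fintype R] [DecidableEq R]

def polynomialFunctionsOfNatDegreeLE (d : ℕ) : Finset (R → R) :=
  univ.image fun (c : Fin (d + 1) → R) (x : R) => ∑ i, c i * x ^ (i : ℕ)

variable {R}

theorem eval_mem_polynomialFunctionsOfNatDegreeLE {d : ℕ} {g : R[X]} (hg : g.natDegree ≤ d) :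
    (fun x => g.eval x) ∈ polynomialFunctionsOfNatDegreeLE R d := by
  refine mem_image.2 ⟨fun i => g.coeff i, mem_univ _, funext fun x => ?_⟩
  rw [eval_eq_sum_range' (Nat.lt_succ_of_le hg), ← Fin.sum_univ_eq_sum_range]

theorem card_polynomialFunctionsOfNatDegreeLE_le (d : ℕ) :
    #(polynomialFunctionsOfNatDegreeLE R d) ≤ Fintype.card R ^ (d + 1) :=
  card_image_le.trans (by simp)

theorem card_filter_exists_natDegree_le_hammingDist_le (d : ℕ) {r : ℕ}
    (hr : r ≤ Fintype.card R) :
    #{f : R → R | ∃ g : R[X], g.natDegree ≤ d ∧ hammingDist f (fun x => g.eval x) ≤ r}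
      ≤ Fintype.card R ^ (d + 1) * ((Fintype.card R).choose r * Fintype.card R ^ r) := by
  have hcover :
      ({f : R → R | ∃ g : R[X], g.natDegree ≤ d ∧ hammingDist f (fun x => g.eval x) ≤ r} :
        Finset _) ⊆ (polynomialFunctionsOfNatDegreeLE R d).biUnion
          fun p => {f : R → R | hammingDist f p ≤ r} := by
    intro f hf
    obtain ⟨g, hg, hdist⟩ := (mem_filter.1 hf).2
    exact mem_biUnion.2 ⟨_, eval_mem_polynomialFunctionsOfNatDegreeLE hg,
      mem_filter.2 ⟨mem_univ _, hdist⟩⟩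
  calc _ ≤ ∑ p ∈ polynomialFunctionsOfNatDegreeLE R d, #{f : R → R | hammingDist f p ≤ r} :=
        (card_le_card hcover).trans card_biUnion_le
    _ ≤ #(polynomialFunctionsOfNatDegreeLE R d) •
          ((Fintype.card R).choose r * Fintype.card R ^ r) :=
        sum_le_card_nsmul _ _ _ fun p _ => card_hammingDist_le_le p hr
    _ ≤ _ := by
        rw [smul_eq_mul]
        exact Nat.mul_le_mul_right _ (card_polynomialFunctionsOfNatDegreeLE_le d)

end PolynomialFunctions

theorem four_pow_mul_le_pow_div_six {q : ℕ} (hq : 2 ^ 42 ≤ q) :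
    4 ^ q * q ≤ 2 ^ 35 * q ^ (q / 6) :=
  calc 4 ^ q * q ≤ 4 ^ q * 2 ^ q := Nat.mul_le_mul_left _ Nat.lt_two_pow_self.le
    _ = 2 ^ (3 * q) := by rw [show 4 = 2 ^ 2 from rfl, ← pow_mul, ← pow_add]; ring_nf
    _ ≤ 2 ^ (35 + 42 * (q / 6)) := Nat.pow_le_pow_right two_pos (by omega)
    _ = 2 ^ 35 * (2 ^ 42) ^ (q / 6) := by rw [pow_add, pow_mul]
    _ ≤ 2 ^ 35 * q ^ (q / 6) := Nat.mul_le_mul_left _ (Nat.pow_le_pow_left hq _)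

theorem four_pow_mul_pow_le_pow {q : ℕ} (hq : 2 ^ 42 ≤ q) :
    4 ^ q * q ^ (q / 2 + 1 + q / 3) ≤ 2 ^ 35 * q ^ q := by
  refine Nat.le_of_mul_le_mul_right ?_ (show 0 < q ^ (q / 6) by positivity)
  calc 4 ^ q * q ^ (q / 2 + 1 + q / 3) * q ^ (q / 6)
      = 4 ^ q * q ^ (q / 2 + 1 + q / 3 + q / 6) := by ring
    _ ≤ 4 ^ q * q ^ (q + 1) := Nat.mul_le_mul_left _ (Nat.pow_le_pow_right (by omega) (by omega))
    _ = 4 ^ q * q * q ^ q := by ring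
    _ ≤ 2 ^ 35 * q ^ (q / 6) * q ^ q := Nat.mul_le_mul_right _ (four_pow_mul_le_pow_div_six hq)
    _ = 2 ^ 35 * q ^ q * q ^ (q / 6) := by ring

theorem one_sub_le_card_filter_not_exists_natDegree_le_hammingDist_le_div
    (R : Type*) [Semiring R] [Fintype R] [DecidableEq R] (hq : 2 ^ 42 ≤ Fintype.card R) :
    1 - 2 ^ 35 / 2 ^ Fintype.card R ≤
      (#{f : R → R | ¬ ∃ g : R[X], g.natDegree ≤ Fintype.card R / 2 ∧
          hammingDist f (fun x => g.eval x) ≤ Fintype.card R / 3} : ℝ)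
        / Fintype.card (R → R) := by
  set q := Fintype.card R
  set near := #{f : R → R | ∃ g : R[X], g.natDegree ≤ q / 2 ∧
    hammingDist f (fun x => g.eval x) ≤ q / 3}
  have hnear : near * 2 ^ q ≤ 2 ^ 35 * q ^ q :=
    calc near * 2 ^ q ≤ q ^ (q / 2 + 1) * (q.choose (q / 3) * q ^ (q / 3)) * 2 ^ q :=
          Nat.mul_le_mul_right _
            (card_filter_exists_natDegree_le_hammingDist_le _ (Nat.div_le_self q 3))
      _ ≤ q ^ (q / 2 + 1) * (2 ^ q * q ^ (q / 3)) * 2 ^ q := by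
          gcongr
          exact Nat.choose_le_two_pow _ _
      _ = 4 ^ q * q ^ (q / 2 + 1 + q / 3) := by
          rw [show 4 = 2 * 2 from rfl, mul_pow, pow_add]; ring
      _ ≤ 2 ^ 35 * q ^ q := four_pow_mul_pow_le_pow hq
  set far := #{f : R → R | ¬ ∃ g : R[X], g.natDegree ≤ q / 2 ∧
    hammingDist f (fun x => g.eval x) ≤ q / 3}
  have hsplit : near + far = q ^ q := by
    rw [card_filter_add_card_filter_not, card_univ, Fintype.card_fun]
  have hqq : (0 : ℝ) < (q : ℝ) ^ q := by
    have : 0 < q := by omega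
    positivity
  have hnearR : (near : ℝ) / (q : ℝ) ^ q ≤ 2 ^ 35 / 2 ^ q := by
    rw [div_le_div_iff₀ hqq (by positivity)]
    exact_mod_cast hnear
  have hfarR : (far : ℝ) / (q : ℝ) ^ q = 1 - near / (q : ℝ) ^ q := by
    rw [eq_sub_iff_add_eq, ← add_div, div_eq_one_iff_eq hqq.ne']
    exact_mod_cast (add_comm far near).trans hsplit
  rw [Fintype.card_fun, Nat.cast_pow, hfarR]
  linarith

theorem one_third_lt_div_iff {n q : ℕ} (hq : 0 < q) : (1 : ℝ) / 3 < n / q ↔ q / 3 < n := by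
  rw [div_lt_div_iff₀ (by norm_num) (by exact_mod_cast hq), Nat.div_lt_iff_lt_mul (by norm_num)]
  norm_cast
  omega

/-- With probability `1−o(1)` (as `|F| → ∞`), a uniformly random function
`λ : F → F` on a finite field `F` has relative Hamming distance greater than `1/3` from
every polynomial over `F` of degree at most `|F|/2`. -/
theorem stmt2 :
    ∀ ε : ℝ, 0 < ε → ∃ N : ℕ,
      ∀ (F : Type) [Field F] [Fintype F] [DecidableEq F],
        N ≤ Fintype.card F →
        1 - ε ≤
          ((Finset.univ.filter (fun lam : F → F =>
              ∀ g : Polynomial F, g.natDegree ≤ Fintype.card F / 2 →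
                (1 : ℝ) / 3 <
                  (hammingDist lam (fun x => g.eval x) : ℝ) / (Fintype.card F : ℝ))).card : ℝ)
            / (Fintype.card (F → F) : ℝ) := by
  intro ε hε
  obtain ⟨n₀, hn₀⟩ := pow_unbounded_of_one_lt (2 ^ 35 / ε) (one_lt_two : (1 : ℝ) < 2)
  refine ⟨max (2 ^ 42) n₀, fun F _ _ _ hN => ?_⟩
  have hq : 2 ^ 42 ≤ Fintype.card F := le_of_max_le_left hN
  have hsmall : (2 : ℝ) ^ 35 / 2 ^ Fintype.card F ≤ ε := by
    rw [div_le_iff₀ (by positivity), ← div_le_iff₀' hε]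
    exact hn₀.le.trans (pow_le_pow_right₀ one_le_two (le_of_max_le_right hN))
  have hfar : ∀ f : F → F, (∀ g : F[X], g.natDegree ≤ Fintype.card F / 2 →
      (1 : ℝ) / 3 < (hammingDist f (fun x => g.eval x) : ℝ) / (Fintype.card F : ℝ)) ↔
      ¬ ∃ g : F[X], g.natDegree ≤ Fintype.card F / 2 ∧
        hammingDist f (fun x => g.eval x) ≤ Fintype.card F / 3 := by
    intro f
    simp only [one_third_lt_div_iff (Fintype.card_pos : 0 < Fintype.card F), not_exists,
      not_and, not_le]
  rw [filter_congr fun f _ => hfar f]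
  exact (sub_le_sub_left hsmall 1).trans
    (one_sub_le_card_filter_not_exists_natDegree_le_hammingDist_le_div F hq)
end

section
/- Let P ⊆ {0,1}^n and ε > 0 be such that every ε-tester for P requires Ω(n) queries. Then any constant-query PCPP system for P with soundness parameter δ = 1/3 must use a proof string of length Ω(n). -/
open scoped Classical

/-- The list of oracle answers obtained by running an adaptive querying strategy against
an oracle `f` for a given number of rounds. -/
def runAnswers {D : Type} (f : D → Bool) (qf : List Bool → D) : ℕ → List Bool
  | 0 => []
  | n + 1 => runAnswers f qf n ++ [f (qf (runAnswers f qf n))]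

/-- A randomized (possibly adaptive) oracle algorithm over the domain `D`: a distribution
over pairs of a query strategy and an output function on transcripts. -/
def Algo (D : Type) : Type := PMF ((List Bool → D) × (List Bool → Bool))

/-- The probability that the algorithm `A`, making `q` queries to the oracle `f`,
accepts (outputs `true`). -/
noncomputable def acceptProb {D : Type} (A : Algo D) (q : ℕ) (f : D → Bool) : ENNReal :=
  PMF.map (fun a => a.2 (runAnswers f a.1 q)) A true

/-- `A` is a `q`-query `ε`-tester for the property `P ⊆ {0,1}ⁿ`: it accepts members of
`P` with probability at least `2/3` and rejects inputs at relative Hamming distance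
greater than `ε` from `P` with probability at least `2/3`. -/
def IsTester {n : ℕ} (P : Set (Fin n → Bool)) (ε : ℝ) (q : ℕ) (A : Algo (Fin n)) : Prop :=
  (∀ f ∈ P, 2 / 3 ≤ acceptProb A q f) ∧
  (∀ f : Fin n → Bool, (∀ g ∈ P, ε * n < (hammingDist f g : ℝ)) →
    acceptProb A q f ≤ 1 / 3)

/-- `V` is a `q`-query PCPP verifier for `P ⊆ {0,1}ⁿ` with proof length `t`, detection
radius `ε` and soundness `1/3`: the verifier has oracle access to the input concatenated
with a proof string; inputs in `P` have a proof accepted with probability `1`, and for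
inputs `ε`-far from `P` every proof is rejected with probability greater than `1/3`. -/
def IsPCPP {n t : ℕ} (P : Set (Fin n → Bool)) (ε : ℝ) (q : ℕ)
    (V : Algo (Fin n ⊕ Fin t)) : Prop :=
  (∀ x ∈ P, ∃ π : Fin t → Bool, acceptProb V q (Sum.elim x π) = 1) ∧
  (∀ x : Fin n → Bool, (∀ g ∈ P, ε * n < (hammingDist x g : ℝ)) →
    ∀ π : Fin t → Bool, acceptProb V q (Sum.elim x π) < 2 / 3)

/-!
Soundness amplification turns the PCPP verifier into a tester. Run `k = 2t + 3` independent
copies of the verifier. Each copy makes `q` adaptive queries, so the transcripts it can see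
before a query have codes below a bound `B(q)`, and the tester queries, non-adaptively, every
input position that some copy asks about after some transcript: `k · B(q) = O(t)` queries in
total. It then accepts iff a single proof makes all `k` simulated runs accept. An input in `P`
is accepted with probability `1` because of its honest proof. For an input that is `ε`-far from
`P`, each of the `2^t` proofs makes all runs accept with probability at most `(2/3)^k`, and the
union bound gives `2^t (2/3)^(2t+3) ≤ 1/3`. Since testers need `Ω(n)` queries, `t = Ω(n)`.
-/

open Encodable

section Oracle

variable {D D' : Type}

theorem runAnswers_length (f : D → Bool) (qf : List Bool → D) (m : ℕ) :
    (runAnswers f qf m).length = m := by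
  induction m with
  | zero => rfl
  | succ m ih => simp [runAnswers, ih]

theorem runAnswers_congr {f : D → Bool} {qf : List Bool → D} {f' : D' → Bool}
    {qf' : List Bool → D'} {m : ℕ} (h : ∀ u : List Bool, u.length < m → f (qf u) = f' (qf' u)) :
    runAnswers f qf m = runAnswers f' qf' m := by
  induction m with
  | zero => rfl
  | succ m ih =>
    have ih := ih fun u hu => h u (Nat.lt_succ_of_lt hu)
    rw [runAnswers, runAnswers, ih, h _ (by rw [runAnswers_length]; exact Nat.lt_succ_self m)]

theorem runAnswers_nonadaptive (f : D → Bool) (pos : ℕ → D) (m : ℕ) :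
    runAnswers f (fun ts => pos ts.length) m = List.ofFn fun r : Fin m => f (pos r) := by
  induction m with
  | zero => rfl
  | succ m ih => rw [runAnswers, ih, List.ofFn_succ_last]; simp

theorem runAnswers_nonadaptive_getD (f : D → Bool) (pos : ℕ → D) {m r : ℕ} (hr : r < m) :
    (runAnswers f (fun ts => pos ts.length) m).getD r false = f (pos r) := by
  simp [runAnswers_nonadaptive, hr]

end Oracle

noncomputable def transcriptCodeBound (q : ℕ) : ℕ :=
  ((List.finite_length_lt Bool q).image encode).toFinset.sup id + 1

theorem encode_lt_transcriptCodeBound {q : ℕ} {u : List Bool} (hu : u.length < q) :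
    encode u < transcriptCodeBound q :=
  Nat.lt_succ_of_le (Finset.le_sup (f := id) (by simpa using hu))

namespace PMF

variable {S : Type*}

noncomputable def iid (p : PMF S) : (k : ℕ) → PMF (Fin k → S)
  | 0 => pure default
  | k + 1 => p.bind fun s => (iid p k).map (Fin.cons s)

theorem toOuterMeasure_iid_forall_mem (p : PMF S) (A : Set S) (k : ℕ) :
    (p.iid k).toOuterMeasure {ω | ∀ i, ω i ∈ A} = p.toOuterMeasure A ^ k := by
  induction k with
  | zero => simp [iid]
  | succ k ih =>
    have hcons (s : S) : p s * (p.iid k).toOuterMeasure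
        (Fin.cons (α := fun _ => S) s ⁻¹' {ω | ∀ i, ω i ∈ A})
        = A.indicator p s * p.toOuterMeasure A ^ k := by
      by_cases hs : s ∈ A <;> simp [Fin.forall_fin_succ, hs, ih]
    simp_rw [iid, toOuterMeasure_bind_apply, toOuterMeasure_map_apply, hcons,
      ENNReal.tsum_mul_right, ← toOuterMeasure_apply, pow_succ']

end PMF

section Tester

variable {D T : Type}

def acceptingRuns (f : D → Bool) (q : ℕ) : Set ((List Bool → D) × (List Bool → Bool)) :=
  {a | a.2 (runAnswers f a.1 q) = true}

theorem acceptProb_eq_toOuterMeasure (A : Algo D) (q : ℕ) (f : D → Bool) :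
    acceptProb A q f = PMF.toOuterMeasure A (acceptingRuns f q) := by
  rw [acceptProb, ← PMF.toOuterMeasure_apply_singleton, PMF.toOuterMeasure_map_apply (p := A)]
  rfl

/-- Query `r` asks copy `r / B` for the input position it queries after the transcript with code
`r % B`, where `B = transcriptCodeBound q`; proof positions and unused indices become `d₀`. -/
noncomputable def testerQuery (d₀ : D) (q k : ℕ)
    (ω : Fin k → (List Bool → D ⊕ T) × (List Bool → Bool)) (r : ℕ) : D :=
  if h : r / transcriptCodeBound q < k then
    (decode (r % transcriptCodeBound q)).elim d₀ fun u =>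
      Sum.elim id (fun _ => d₀) ((ω ⟨_, h⟩).1 u)
  else d₀

/-- The answer copy `i` with query strategy `sf` sees after transcript `u` when the proof is `π`,
input answers being read off the tester's transcript `ts`. -/
noncomputable def simulatedAnswer (q i : ℕ) (sf : List Bool → D ⊕ T) (π : T → Bool)
    (ts u : List Bool) : Bool :=
  Sum.elim (fun _ => ts.getD (i * transcriptCodeBound q + encode u) false) π (sf u)

noncomputable def testerOfVerifier (d₀ : D) (q k : ℕ) (V : Algo (D ⊕ T)) : Algo D :=
  (PMF.iid V k).map fun ω =>
    (fun ts => testerQuery d₀ q k ω ts.length,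
     fun ts => decide (∃ π : T → Bool, ∀ i : Fin k,
       (ω i).2 (runAnswers (simulatedAnswer q i (ω i).1 π ts) id q) = true))

theorem runAnswers_simulatedAnswer (d₀ : D) (q k : ℕ)
    (ω : Fin k → (List Bool → D ⊕ T) × (List Bool → Bool)) (x : D → Bool) (π : T → Bool)
    (i : Fin k) :
    runAnswers (simulatedAnswer q i (ω i).1 π
        (runAnswers x (fun ts => testerQuery d₀ q k ω ts.length) (k * transcriptCodeBound q))) id q
      = runAnswers (Sum.elim x π) (ω i).1 q := by
  refine runAnswers_congr fun u hu => ?_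
  set B := transcriptCodeBound q
  have hu : encode u < B := encode_lt_transcriptCodeBound hu
  have hdiv : (i * B + encode u) / B = i := by
    rw [add_comm, Nat.add_mul_div_right _ _ (by omega), Nat.div_eq_of_lt hu, zero_add]
  have hmod : (i * B + encode u) % B = encode u := by
    rw [add_comm, Nat.add_mul_mod_self_right, Nat.mod_eq_of_lt hu]
  have hlt : i * B + encode u < k * B :=
    calc i * B + encode u < (i + 1) * B := by rw [Nat.succ_mul]; omega
      _ ≤ k * B := Nat.mul_le_mul_right _ i.isLt
  rcases hsf : (ω i).1 u with j | j
  · rw [simulatedAnswer, id, hsf, Sum.elim_inl, Sum.elim_inl, runAnswers_nonadaptive_getD _ _ hlt]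
    simp [testerQuery, B, hdiv, hmod, hsf]
  · rw [simulatedAnswer, id, hsf]; rfl

theorem acceptProb_testerOfVerifier (d₀ : D) (q k : ℕ) (V : Algo (D ⊕ T)) (x : D → Bool) :
    acceptProb (testerOfVerifier d₀ q k V) (k * transcriptCodeBound q) x
      = (PMF.iid V k).toOuterMeasure
          {ω | ∃ π : T → Bool, ∀ i, ω i ∈ acceptingRuns (Sum.elim x π) q} := by
  rw [acceptProb_eq_toOuterMeasure, testerOfVerifier, PMF.toOuterMeasure_map_apply]
  congr 1
  ext ω
  simp [acceptingRuns, runAnswers_simulatedAnswer]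

end Tester

theorem two_pow_mul_two_thirds_pow_le (t : ℕ) :
    (2 : ENNReal) ^ t * (2 / 3) ^ (2 * t + 3) ≤ 1 / 3 := by
  have h : (2 : ℝ) ^ t * (2 / 3) ^ (2 * t + 3) ≤ 1 / 3 :=
    calc (2 : ℝ) ^ t * (2 / 3) ^ (2 * t + 3) = (8 / 9) ^ t * (8 / 27) := by
          rw [pow_add, pow_mul, ← mul_assoc, ← mul_pow]; norm_num
      _ ≤ 1 ^ t * (8 / 27) := by gcongr; norm_num
      _ ≤ 1 / 3 := by norm_num
  have h' := ENNReal.ofReal_le_ofReal h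
  rw [ENNReal.ofReal_mul (by positivity), ENNReal.ofReal_pow (by norm_num),
    ENNReal.ofReal_pow (by norm_num), ENNReal.ofReal_div_of_pos (by norm_num),
    ENNReal.ofReal_div_of_pos (by norm_num)] at h'
  simpa using h'

theorem IsPCPP.isTester_testerOfVerifier {n t : ℕ} {P : Set (Fin n → Bool)} {ε : ℝ} {q : ℕ}
    {V : Algo (Fin n ⊕ Fin t)} (hV : IsPCPP P ε q V) (d₀ : Fin n) :
    IsTester P ε ((2 * t + 3) * transcriptCodeBound q) (testerOfVerifier d₀ q (2 * t + 3) V) := by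
  set k := 2 * t + 3
  refine ⟨fun x hx => ?_, fun x hfar => ?_⟩
  · obtain ⟨π₀, hπ₀⟩ := hV.1 x hx
    rw [acceptProb_eq_toOuterMeasure] at hπ₀
    calc (2 / 3 : ENNReal) ≤ 1 := ENNReal.div_le_of_le_mul (by norm_num)
      _ = (PMF.iid V k).toOuterMeasure {ω | ∀ i, ω i ∈ acceptingRuns (Sum.elim x π₀) q} := by
          rw [PMF.toOuterMeasure_iid_forall_mem (p := V), hπ₀, one_pow]
      _ ≤ acceptProb (testerOfVerifier d₀ q k V) (k * transcriptCodeBound q) x := by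
          rw [acceptProb_testerOfVerifier]
          exact MeasureTheory.measure_mono fun ω hω => ⟨π₀, hω⟩
  · have hsound (π : Fin t → Bool) :
        PMF.toOuterMeasure V (acceptingRuns (Sum.elim x π) q) ≤ 2 / 3 := by
      rw [← acceptProb_eq_toOuterMeasure]
      exact (hV.2 x hfar π).le
    calc acceptProb (testerOfVerifier d₀ q k V) (k * transcriptCodeBound q) x
        = (PMF.iid V k).toOuterMeasure
            (⋃ π : Fin t → Bool, {ω | ∀ i, ω i ∈ acceptingRuns (Sum.elim x π) q}) := by
          rw [acceptProb_testerOfVerifier, Set.ofPred_exists]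
      _ ≤ ∑ π : Fin t → Bool, PMF.toOuterMeasure V (acceptingRuns (Sum.elim x π) q) ^ k := by
          simp_rw [← PMF.toOuterMeasure_iid_forall_mem (p := V)]
          exact MeasureTheory.measure_iUnion_fintype_le _ _
      _ ≤ ∑ _π : Fin t → Bool, (2 / 3 : ENNReal) ^ k := by
          gcongr with π; exact hsound π
      _ = 2 ^ t * (2 / 3) ^ k := by simp
      _ ≤ 1 / 3 := two_pow_mul_two_thirds_pow_le t

theorem stmt8_general (P : ∀ n : ℕ, Set (Fin n → Bool)) (ε : ℝ)
    (hard : ∃ c : ℝ, 0 < c ∧ ∃ N : ℕ, ∀ n ≥ N, ∀ (q : ℕ) (A : Algo (Fin n)),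
      IsTester (P n) ε q A → c * n ≤ q) :
    ∀ q : ℕ, ∃ c' : ℝ, 0 < c' ∧ ∃ N' : ℕ, ∀ n ≥ N', ∀ (t : ℕ) (V : Algo (Fin n ⊕ Fin t)),
      IsPCPP (P n) ε q V → c' * n ≤ t := by
  obtain ⟨c, hc, N, hN⟩ := hard
  intro q
  set B : ℝ := (transcriptCodeBound q : ℝ)
  have hB : 0 < B := Nat.cast_pos.mpr (Nat.succ_pos _)
  -- `c n ≤ (2t + 3) B` together with `6 B ≤ c n` gives `c n ≤ 4 B t`.
  refine ⟨c / (4 * B), by positivity, max N ⌈6 * B / c⌉₊, fun n hn t V hV => ?_⟩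
  have hnB : 6 * B ≤ c * n := by
    have := (Nat.le_ceil _).trans (Nat.cast_le.mpr (le_of_max_le_right hn))
    rw [div_le_iff₀ hc] at this
    linarith
  have hn0 : 0 < n := by
    by_contra! h
    simp only [Nat.le_zero.mp h, Nat.cast_zero, mul_zero] at hnB
    linarith
  have hq := hN n (le_of_max_le_left hn) _ _ (hV.isTester_testerOfVerifier ⟨0, hn0⟩)
  push_cast at hq
  rw [div_mul_eq_mul_div, div_le_iff₀ (by positivity)]
  linarith

/-- Let `P ⊆ {0,1}ⁿ` (a family of properties) and `ε > 0` be such that every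
`ε`-tester for `P` requires `Ω(n)` queries.  Then any constant-query PCPP system for `P`
with soundness `1/3` must use a proof string of length `Ω(n)`. -/
theorem stmt8 (P : ∀ n : ℕ, Set (Fin n → Bool)) (ε : ℝ) (hε : 0 < ε)
    (hard : ∃ c : ℝ, 0 < c ∧ ∃ N : ℕ, ∀ n ≥ N, ∀ (q : ℕ) (A : Algo (Fin n)),
      IsTester (P n) ε q A → c * n ≤ q) :
    ∀ q : ℕ, ∃ c' : ℝ, 0 < c' ∧ ∃ N' : ℕ, ∀ n ≥ N', ∀ (t : ℕ) (V : Algo (Fin n ⊕ Fin t)),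
      IsPCPP (P n) ε q V → c' * n ≤ t :=
  stmt8_general P ε hard
end

section
/- For all sufficiently large k, there exist vectors v₁,…,v_{3k} ∈ {0,1}^{4k} such that Span{v₁,…,v_{3k}} is a linear code of relative distance at least 1/30 and Span{v_{k+1},…,v_{3k}} is a linear code of relative dual distance at least 1/10. In fact, uniformly random vectors satisfy both conditions with probability 1−o(1). -/
open scoped Classical

open Finset Filter Topology

/-!
For a fixed nonzero coefficient vector `c`, the combination `∑ cᵢ vᵢ` of uniformly random
vectors `vᵢ ∈ 𝔽₂ⁿ` is again uniform, being the image of the uniform measure under a surjective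
linear map. A union bound over the `2^{3k}` vectors `c` shows that the span of all `3k`
vectors contains a nonzero word of weight `< n/30` with probability at most
`2^{3k} |B(n, n/30)| / 2ⁿ`. Likewise, for a fixed `u ≠ 0` the `2k` inner products
`⟨u, v_{k+i}⟩` are uniform on `𝔽₂^{2k}`, so some nonzero `u` of weight `< n/10` is orthogonal to
the last `2k` vectors with probability at most `|B(n, n/10)| / 2^{2k}`. For `n = 4k` the
estimate `|B(n, t)| ≤ aᵗ (1 + 1/a)ⁿ` (with `a = 16`, resp. `a = 8`) makes both terms
exponentially small.
-/

section Counting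

variable {G H ι : Type*} [AddGroup G] [Fintype G] [AddMonoid H] [Fintype H] [DecidableEq H]

theorem AddMonoidHom.card_filter_map_mem_mul_card (φ : G →+ H) (hφ : Function.Surjective φ)
    (T : Finset H) : #{g | φ g ∈ T} * Fintype.card H = #T * Fintype.card G := by
  have hfiber (y : H) : #{g | φ g = y} = #{g | φ g = 0} :=
    AddMonoidHom.card_fiber_eq_of_mem_range φ (hφ y) (hφ 0)
  have hG : Fintype.card G = ∑ y : H, #{g | φ g = y} :=
    card_eq_sum_card_fiberwise fun _ _ => mem_univ _
  have hT : #{g | φ g ∈ T} = ∑ y ∈ T, #{g | φ g = y} := by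
    refine (card_eq_sum_card_fiberwise fun g hg => (mem_filter.mp hg).2).trans ?_
    refine sum_congr rfl fun y hy => congrArg card ?_
    ext g; simp +contextual [hy]
  simp only [hG, hT, hfiber, sum_const, smul_eq_mul, card_univ]
  ring

theorem card_filter_exists_map_mem_mul_card_le (φ : ι → G →+ H) (S : Finset ι)
    (hφ : ∀ i ∈ S, Function.Surjective (φ i)) (T : Finset H) :
    #{g | ∃ i ∈ S, φ i g ∈ T} * Fintype.card H ≤ #S * #T * Fintype.card G := by
  have hunion : ({g | ∃ i ∈ S, φ i g ∈ T} : Finset G) = S.biUnion fun i => {g | φ i g ∈ T} := by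
    ext g; simp
  calc #{g | ∃ i ∈ S, φ i g ∈ T} * Fintype.card H
      ≤ (∑ i ∈ S, #{g | φ i g ∈ T}) * Fintype.card H := by
        rw [hunion]; gcongr; exact card_biUnion_le
    _ = ∑ i ∈ S, #T * Fintype.card G := by
        rw [sum_mul]
        exact sum_congr rfl fun i hi => (φ i).card_filter_map_mem_mul_card (hφ i hi) T
    _ = #S * #T * Fintype.card G := by rw [sum_const, smul_eq_mul, mul_assoc]

end Counting

theorem one_sub_sub_le_ncard_and_div {Ω : Type*} [Fintype Ω] [Nonempty Ω] {P Q : Ω → Prop}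
    {a b : ℝ} (hP : ({x | ¬ P x}.ncard : ℝ) ≤ a * Fintype.card Ω)
    (hQ : ({x | ¬ Q x}.ncard : ℝ) ≤ b * Fintype.card Ω) :
    1 - a - b ≤ {x | P x ∧ Q x}.ncard / Fintype.card Ω := by
  have hcover : Set.univ ⊆ {x | P x ∧ Q x} ∪ ({x | ¬ P x} ∪ {x | ¬ Q x}) := fun x _ => by
    by_cases P x <;> by_cases Q x <;> simp_all
  have hcard :
      Fintype.card Ω ≤ {x | P x ∧ Q x}.ncard + ({x | ¬ P x}.ncard + {x | ¬ Q x}.ncard) :=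
    calc Fintype.card Ω = (Set.univ : Set Ω).ncard := by
          rw [Set.ncard_univ, Nat.card_eq_fintype_card]
      _ ≤ _ := Set.ncard_le_ncard hcover
      _ ≤ _ := (Set.ncard_union_le _ _).trans (Nat.add_le_add_left (Set.ncard_union_le _ _) _)
  have hpos : (0 : ℝ) < Fintype.card Ω := by exact_mod_cast Fintype.card_pos
  rw [le_div_iff₀ hpos]
  have hcardR : (Fintype.card Ω : ℝ)
      ≤ {x | P x ∧ Q x}.ncard + ({x | ¬ P x}.ncard + {x | ¬ Q x}.ncard) := by
    exact_mod_cast hcard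
  nlinarith

section HammingBall

variable {ι β : Type*} [Fintype ι] [DecidableEq ι] [Fintype β] [Zero β] [DecidableEq β]

theorem sum_pow_hammingNorm (z : ℝ) :
    ∑ x : ι → β, z ^ hammingNorm x = (1 + (Fintype.card β - 1) * z) ^ Fintype.card ι := by
  have hprod (x : ι → β) : z ^ hammingNorm x = ∏ i, if x i ≠ 0 then z else 1 := by
    rw [prod_ite, prod_const, prod_const_one, mul_one]; rfl
  have hsum : ∑ b : β, (if b ≠ 0 then z else 1) = 1 + (Fintype.card β - 1) * z := by
    have (b : β) : (if b ≠ 0 then z else 1) = z + if b = 0 then 1 - z else 0 := by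
      split_ifs <;> simp_all
    simp only [this, sum_add_distrib, sum_const, sum_ite_eq', mem_univ, if_true, card_univ,
      nsmul_eq_mul]
    ring
  simp_rw [hprod, ← Fintype.prod_sum (fun (_ : ι) (b : β) => if b ≠ 0 then z else 1), hsum,
    prod_const, card_univ]

theorem card_hammingNorm_lt_le (d : ℝ) {a : ℝ} (ha : 1 ≤ a) :
    (#{x : ι → β | (hammingNorm x : ℝ) < d} : ℝ)
      ≤ a ^ ⌊d⌋₊ * (1 + (Fintype.card β - 1) / a) ^ Fintype.card ι := by
  calc (#{x : ι → β | (hammingNorm x : ℝ) < d} : ℝ)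
      ≤ ∑ x ∈ {x : ι → β | (hammingNorm x : ℝ) < d}, a ^ ⌊d⌋₊ * a⁻¹ ^ hammingNorm x := by
        rw [← nsmul_one]
        refine card_nsmul_le_sum _ _ _ fun x hx => ?_
        rw [inv_pow, ← div_eq_mul_inv, one_le_div (by positivity)]
        exact pow_le_pow_right₀ ha (Nat.le_floor (mem_filter.mp hx).2.le)
    _ ≤ ∑ x : ι → β, a ^ ⌊d⌋₊ * a⁻¹ ^ hammingNorm x :=
        sum_le_sum_of_subset_of_nonneg (filter_subset _ _) fun _ _ _ => by positivity
    _ = a ^ ⌊d⌋₊ * (1 + (Fintype.card β - 1) / a) ^ Fintype.card ι := by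
        rw [← mul_sum, sum_pow_hammingNorm, div_eq_mul_inv]

end HammingBall

section LinearMaps

variable {K I J ι M : Type*} [Fintype I] [Fintype ι]

@[simps]
def linearCombinationHom [Semiring K] [AddCommMonoid M] [Module K M] (c : I → K) :
    (I → M) →+ M where
  toFun v := ∑ i, c i • v i
  map_zero' := by simp
  map_add' v w := by simp [smul_add, sum_add_distrib]

@[simps]
def dotProductsHom [Semiring K] (u : ι → K) : (J → ι → K) →+ (J → K) where
  toFun v j := ∑ l, u l * v j l
  map_zero' := by ext; simp
  map_add' v w := by ext j; simp [mul_add, sum_add_distrib]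

variable [DivisionRing K]

theorem linearCombinationHom_surjective [AddCommMonoid M] [Module K M] {c : I → K}
    (hc : c ≠ 0) : Function.Surjective (linearCombinationHom c : (I → M) →+ M) := by
  obtain ⟨i, hi⟩ := Function.ne_iff.mp hc
  refine fun x => ⟨Pi.single i ((c i)⁻¹ • x), ?_⟩
  simp [Pi.single_apply, smul_smul, mul_inv_cancel₀ hi]

theorem dotProductsHom_surjective {u : ι → K} (hu : u ≠ 0) :
    Function.Surjective (dotProductsHom u : (J → ι → K) →+ (J → K)) := by
  obtain ⟨l, hl⟩ := Function.ne_iff.mp hu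
  refine fun g => ⟨fun j => Pi.single l ((u l)⁻¹ * g j), funext fun j => ?_⟩
  simp [Pi.single_apply, ← mul_assoc, mul_inv_cancel₀ hl]

end LinearMaps

theorem tendsto_pow_mul_pow_atTop_nhds_zero {a b : ℝ} {m s : ℕ} {t : ℕ → ℕ} (ha : 1 ≤ a)
    (hb : 0 ≤ b) (hm : m ≠ 0) (ht : ∀ k, m * t k ≤ s * k) (hab : a ^ s * b ^ m < 1) :
    Tendsto (fun k => a ^ t k * b ^ k) atTop (𝓝 0) := by
  have hf (k : ℕ) : 0 ≤ a ^ t k * b ^ k := by positivity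
  have hpow (k : ℕ) : (a ^ t k * b ^ k) ^ m ≤ (a ^ s * b ^ m) ^ k := by
    calc (a ^ t k * b ^ k) ^ m = a ^ (m * t k) * (b ^ m) ^ k := by ring
      _ ≤ a ^ (s * k) * (b ^ m) ^ k := by gcongr ?_ * _; exact pow_le_pow_right₀ ha (ht k)
      _ = (a ^ s * b ^ m) ^ k := by ring
  have hlim : Tendsto (fun k => (a ^ t k * b ^ k) ^ m) atTop (𝓝 0) :=
    squeeze_zero (fun k => pow_nonneg (hf k) m) hpow
      (tendsto_pow_atTop_nhds_zero_of_lt_one (by positivity) hab)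
  have := hlim.rpow_const (p := (m : ℝ)⁻¹) (Or.inr (by positivity))
  simpa [Real.pow_rpow_inv_natCast (hf _) hm,
    Real.zero_rpow (inv_ne_zero (Nat.cast_ne_zero.mpr hm))] using this

section Codes

variable {K ι : Type*} [Semiring K] [DecidableEq K] [Fintype ι]

def HasDistAtLeast (C : Submodule K (ι → K)) (d : ℝ) : Prop :=
  ∀ x ∈ C, x ≠ 0 → d ≤ (hammingNorm x : ℝ)

def HasDualDistAtLeast (C : Submodule K (ι → K)) (d : ℝ) : Prop :=
  ∀ u : ι → K, (∀ x ∈ C, ∑ j, u j * x j = 0) → u ≠ 0 → d ≤ (hammingNorm u : ℝ)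

end Codes

section RandomFamilies

open Submodule

variable {K ι I J : Type*} [DivisionRing K] [DecidableEq K] [Fintype K] [Fintype ι] [DecidableEq ι]
  [Fintype I] [DecidableEq I] [Fintype J] [DecidableEq J]

theorem card_filter_not_hasDistAtLeast_mul_le (d : ℝ) :
    #{v : I → ι → K | ¬ HasDistAtLeast (span K (Set.range v)) d} * Fintype.card (ι → K)
      ≤ Fintype.card (I → K) * #{x : ι → K | hammingNorm x < d} * Fintype.card (I → ι → K) := by
  have hbad : #{v : I → ι → K | ¬ HasDistAtLeast (span K (Set.range v)) d}
      ≤ #{v | ∃ c ∈ univ.erase (0 : I → K), linearCombinationHom c v ∈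
          ({x : ι → K | hammingNorm x < d} : Finset _)} := by
    refine card_le_card (monotone_filter_right _ fun v _ hv => ?_)
    simp only [HasDistAtLeast, not_forall, not_le] at hv
    obtain ⟨x, hx, hx0, hxd⟩ := hv
    obtain ⟨c, rfl⟩ := (mem_span_range_iff_exists_fun K).mp hx
    refine ⟨c, mem_erase.mpr ⟨fun hc => hx0 (by simp [hc]), mem_univ _⟩, ?_⟩
    simpa using hxd
  refine (Nat.mul_le_mul_right _ hbad).trans ?_
  refine (card_filter_exists_map_mem_mul_card_le _ _
        (fun c hc => linearCombinationHom_surjective (ne_of_mem_erase hc)) _).trans ?_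
  gcongr
  exact card_erase_le.trans card_univ.le

theorem card_filter_not_hasDualDistAtLeast_mul_le {e : J → I} (he : Function.Injective e)
    (d : ℝ) :
    #{v : I → ι → K | ¬ HasDualDistAtLeast (span K (Set.range (v ∘ e))) d}
        * Fintype.card (J → K)
      ≤ #{u : ι → K | hammingNorm u < d} * Fintype.card (I → ι → K) := by
  let ψ (u : ι → K) : (I → ι → K) →+ (J → K) :=
    (dotProductsHom u).comp (LinearMap.funLeft K (ι → K) e).toAddMonoidHom
  have hbad : #{v : I → ι → K | ¬ HasDualDistAtLeast (span K (Set.range (v ∘ e))) d}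
      ≤ #{v | ∃ u ∈ ({u : ι → K | u ≠ 0 ∧ hammingNorm u < d} : Finset _),
          ψ u v ∈ ({0} : Finset _)} := by
    refine card_le_card (monotone_filter_right _ fun v _ hv => ?_)
    simp only [HasDualDistAtLeast, not_forall, not_le] at hv
    obtain ⟨u, hu, hu0, hud⟩ := hv
    exact ⟨u, by simp [hu0, hud], mem_singleton.mpr (funext fun j => hu _ (subset_span ⟨j, rfl⟩))⟩
  calc _ ≤ _ := Nat.mul_le_mul_right _ hbad
    _ ≤ _ := card_filter_exists_map_mem_mul_card_le ψ _ (fun u hu =>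
        (dotProductsHom_surjective (mem_filter.mp hu).2.1).comp
          (LinearMap.funLeft_surjective_of_injective K (ι → K) e he)) _
    _ ≤ _ := by
      rw [card_singleton, mul_one]
      gcongr
      exact And.right

end RandomFamilies

section RandomCodes

open Submodule

theorem ncard_not_hasDistAtLeast_le (k : ℕ) :
    ({v : Fin k ⊕ Fin (2 * k) → Fin (4 * k) → ZMod 2 |
        ¬ HasDistAtLeast (span (ZMod 2) (Set.range v)) (1 / 30 * (4 * k))}.ncard : ℝ)
      ≤ 16 ^ ⌊(1 : ℝ) / 30 * (4 * k)⌋₊ * ((17 / 16) ^ 4 / 2) ^ k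
        * Fintype.card (Fin k ⊕ Fin (2 * k) → Fin (4 * k) → ZMod 2) := by
  rw [Set.ncard_eq_toFinset_card', Set.toFinset_ofPred]
  have hcount : (_ : ℝ) ≤ _ := Nat.cast_le.mpr (card_filter_not_hasDistAtLeast_mul_le
    (K := ZMod 2) (I := Fin k ⊕ Fin (2 * k)) (ι := Fin (4 * k)) (1 / 30 * (4 * k)))
  have hball := card_hammingNorm_lt_le (ι := Fin (4 * k)) (β := ZMod 2)
    (1 / 30 * (4 * k)) (a := 16) (by norm_num)
  have hcoeff : Fintype.card (Fin k ⊕ Fin (2 * k) → ZMod 2) = 2 ^ (3 * k) := by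
    simp [ZMod.card]; ring
  have hword : Fintype.card (Fin (4 * k) → ZMod 2) = 2 ^ (4 * k) := by simp [ZMod.card]
  rw [hcoeff, hword] at hcount
  push_cast at hcount
  norm_num [ZMod.card] at hball
  rw [← mul_le_mul_iff_of_pos_right (by positivity : (0 : ℝ) < 2 ^ (4 * k))]
  refine hcount.trans ?_
  grw [hball]
  refine le_of_eq ?_
  rw [div_pow ((17 / 16 : ℝ) ^ 4), ← pow_mul]
  field_simp
  ring

theorem ncard_not_hasDualDistAtLeast_le (k : ℕ) :
    ({v : Fin k ⊕ Fin (2 * k) → Fin (4 * k) → ZMod 2 |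
        ¬ HasDualDistAtLeast (span (ZMod 2) (Set.range (v ∘ Sum.inr))) (1 / 10 * (4 * k))}.ncard
        : ℝ)
      ≤ 8 ^ ⌊(1 : ℝ) / 10 * (4 * k)⌋₊ * ((9 / 8) ^ 4 / 4) ^ k
        * Fintype.card (Fin k ⊕ Fin (2 * k) → Fin (4 * k) → ZMod 2) := by
  rw [Set.ncard_eq_toFinset_card', Set.toFinset_ofPred]
  have hcount : (_ : ℝ) ≤ _ := Nat.cast_le.mpr (card_filter_not_hasDualDistAtLeast_mul_le
    (K := ZMod 2) (I := Fin k ⊕ Fin (2 * k)) (ι := Fin (4 * k)) Sum.inr_injective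
    (1 / 10 * (4 * k)))
  have hball := card_hammingNorm_lt_le (ι := Fin (4 * k)) (β := ZMod 2)
    (1 / 10 * (4 * k)) (a := 8) (by norm_num)
  have hcheck : Fintype.card (Fin (2 * k) → ZMod 2) = 2 ^ (2 * k) := by simp [ZMod.card]
  rw [hcheck] at hcount
  push_cast at hcount
  norm_num [ZMod.card] at hball
  rw [← mul_le_mul_iff_of_pos_right (by positivity : (0 : ℝ) < 2 ^ (2 * k))]
  refine hcount.trans ?_
  grw [hball]
  refine le_of_eq ?_
  rw [div_pow ((9 / 8 : ℝ) ^ 4), ← pow_mul, pow_mul (2 : ℝ)]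
  field_simp
  norm_num

theorem tendsto_ncard_hasDistAtLeast_and_hasDualDistAtLeast_div :
    Tendsto (fun k : ℕ => ({v : Fin k ⊕ Fin (2 * k) → Fin (4 * k) → ZMod 2 |
        HasDistAtLeast (span (ZMod 2) (Set.range v)) (1 / 30 * (4 * k)) ∧
        HasDualDistAtLeast (span (ZMod 2) (Set.range (v ∘ Sum.inr))) (1 / 10 * (4 * k))}.ncard
        : ℝ)
        / Fintype.card (Fin k ⊕ Fin (2 * k) → Fin (4 * k) → ZMod 2)) atTop (𝓝 1) := by
  -- `⌊4k/30⌋ ≤ 2k/15` and `16² · ((17/16)⁴/2)¹⁵ < 1`; likewise `⌊4k/10⌋ ≤ 2k/5` and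
  -- `8² · ((9/8)⁴/4)⁵ < 1`.
  have hA : Tendsto (fun k : ℕ => 16 ^ ⌊(1 : ℝ) / 30 * (4 * k)⌋₊ * ((17 / 16 : ℝ) ^ 4 / 2) ^ k)
      atTop (𝓝 0) := by
    refine tendsto_pow_mul_pow_atTop_nhds_zero (m := 15) (s := 2) (by norm_num) (by positivity)
      (by norm_num) (fun k => ?_) (by norm_num)
    have := Nat.floor_le (by positivity : (0 : ℝ) ≤ 1 / 30 * (4 * k))
    exact_mod_cast (by linarith : (15 * ⌊(1 : ℝ) / 30 * (4 * k)⌋₊ : ℝ) ≤ 2 * k)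
  have hB : Tendsto (fun k : ℕ => 8 ^ ⌊(1 : ℝ) / 10 * (4 * k)⌋₊ * ((9 / 8 : ℝ) ^ 4 / 4) ^ k)
      atTop (𝓝 0) := by
    refine tendsto_pow_mul_pow_atTop_nhds_zero (m := 5) (s := 2) (by norm_num) (by positivity)
      (by norm_num) (fun k => ?_) (by norm_num)
    have := Nat.floor_le (by positivity : (0 : ℝ) ≤ 1 / 10 * (4 * k))
    exact_mod_cast (by linarith : (5 * ⌊(1 : ℝ) / 10 * (4 * k)⌋₊ : ℝ) ≤ 2 * k)
  have hlower := (tendsto_const_nhds (x := (1 : ℝ))).sub hA |>.sub hB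
  rw [sub_zero, sub_zero] at hlower
  refine tendsto_of_tendsto_of_tendsto_of_le_of_le hlower tendsto_const_nhds
    (fun k => one_sub_sub_le_ncard_and_div (ncard_not_hasDistAtLeast_le k)
      (ncard_not_hasDualDistAtLeast_le k)) (fun k => ?_)
  rw [← Nat.card_eq_fintype_card]
  exact div_le_one_of_le₀ (Nat.cast_le.mpr (Set.ncard_le_card _)) (by positivity)

end RandomCodes

/-- For all sufficiently large `k`, there exist vectors
`v₁,…,v_{3k} ∈ {0,1}^{4k}` (indexed here by `Fin k ⊕ Fin (2k)`, the last `2k` being the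
`Sum.inr` part) such that the span of all of them is a linear code of relative distance
at least `1/30`, and the span of the last `2k` has relative dual distance at least
`1/10`.  In fact, uniformly random vectors satisfy both conditions with probability
`1 − o(1)`. -/
theorem stmt10 :
    (∃ K : ℕ, ∀ k ≥ K, ∃ v : Fin k ⊕ Fin (2 * k) → Fin (4 * k) → ZMod 2,
      (∀ x ∈ Submodule.span (ZMod 2) (Set.range v), x ≠ 0 →
        (1 : ℝ) / 30 * (4 * k) ≤ (hammingNorm x : ℝ)) ∧
      (∀ u : Fin (4 * k) → ZMod 2,
        (∀ x ∈ Submodule.span (ZMod 2) (Set.range (v ∘ Sum.inr)), ∑ j, u j * x j = 0) →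
        u ≠ 0 → (1 : ℝ) / 10 * (4 * k) ≤ (hammingNorm u : ℝ))) ∧
    Filter.Tendsto
      (fun k : ℕ =>
        (({v : Fin k ⊕ Fin (2 * k) → Fin (4 * k) → ZMod 2 |
            (∀ x ∈ Submodule.span (ZMod 2) (Set.range v), x ≠ 0 →
              (1 : ℝ) / 30 * (4 * k) ≤ (hammingNorm x : ℝ)) ∧
            (∀ u : Fin (4 * k) → ZMod 2,
              (∀ x ∈ Submodule.span (ZMod 2) (Set.range (v ∘ Sum.inr)),
                ∑ j, u j * x j = 0) →
              u ≠ 0 → (1 : ℝ) / 10 * (4 * k) ≤ (hammingNorm u : ℝ))}.ncard : ℝ)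
          / (Fintype.card (Fin k ⊕ Fin (2 * k) → Fin (4 * k) → ZMod 2) : ℝ)))
      Filter.atTop (nhds 1) := by
  have htend := tendsto_ncard_hasDistAtLeast_and_hasDualDistAtLeast_div
  refine ⟨?_, htend⟩
  obtain ⟨K, hK⟩ := eventually_atTop.mp (htend.eventually (eventually_gt_nhds one_pos))
  refine ⟨K, fun k hk => ?_⟩
  specialize hK k hk
  obtain ⟨v, hv⟩ := Set.nonempty_of_ncard_ne_zero
    (Nat.cast_pos.mp ((div_pos_iff_of_pos_right (by positivity)).mp hK)).ne'
  exact ⟨v, hv⟩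
end

section
/- Let E⁰(w) = H_k(w) be the base shared-secret code ensemble mapping {0,1}^k into subsets of {0,1}^{4k}, where distinct values have encodings at relative Hamming distance greater than 1/10, and suppose the level-(ℓ−1) ensemble satisfies: for distinct w, w' ∈ {0,1}^{k'}, any two encodings v ∈ E^{ℓ−1}(w) and v' ∈ E^{ℓ−1}(w') have relative Hamming distance Θ(1/4^ℓ). Define the level-ℓ ensemble by E^ℓ(w) = ∪_{g ∈ C_F, g|_H = w} ⊔_{β ∈ F∖H} E^{ℓ−1}(⟨g(β)⟩), where C_F is the set of degree ≤ |F|/2 polynomials over F and H ⊆ F has size k ≤ |F|/c. Then for distinct w̃ ≠ w̃' ∈ {0,1}^k, any encodings ṽ ∈ E^ℓ(w̃) and ṽ' ∈ E^ℓ(w̃') have relative Hamming distance Θ(1/4^{ℓ+1}). -/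
open scoped Classical

/-- distance of the iterated code ensemble: Suppose the level-`(ℓ−1)`
ensemble `E'` (encoding field elements by strings in `{0,1}^m`) satisfies: encodings of
distinct values have relative Hamming distance at least `c/4^ℓ`.  Let the level-`ℓ`
encoding of `w̃ : H → F` be a concatenation over `β ∈ F∖H` of level-`(ℓ−1)` encodings of
`g(β)` for a polynomial `g ∈ C_F` (degree at most `|F|/2`) with `g|_H = w̃`, where
`|H| ≤ |F|/3` (i.e. `|H| = k ≤ |F|/c` for a large enough constant `c`).  Then encodings
of distinct `w̃ ≠ w̃'` have relative Hamming distance at least `(c/4)/4^ℓ = Θ(1/4^{ℓ+1})`: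
the Hamming distance is at least `c/4^{ℓ+1}` times the total length `|F∖H|·m`. -/
theorem stmt12 (F : Type) [Field F] [Fintype F] [DecidableEq F]
    (H : Finset F) (hH : 3 * H.card ≤ Fintype.card F)
    (m ℓ : ℕ) (c : ℝ) (hc : 0 < c)
    (E' : F → Set (Fin m → Bool))
    (hdist : ∀ a b : F, a ≠ b → ∀ va ∈ E' a, ∀ vb ∈ E' b,
      c / 4 ^ ℓ * m ≤ (hammingDist va vb : ℝ))
    (w w' : { x : F // x ∈ H } → F) (hww' : w ≠ w')
    (V V' : { β : F // β ∉ H } × Fin m → Bool)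
    (hV : ∃ g : Polynomial F, g.natDegree ≤ Fintype.card F / 2 ∧
      (∀ x : { x : F // x ∈ H }, g.eval x.1 = w x) ∧
      (∀ β : { β : F // β ∉ H }, (fun j => V (β, j)) ∈ E' (g.eval β.1)))
    (hV' : ∃ g' : Polynomial F, g'.natDegree ≤ Fintype.card F / 2 ∧
      (∀ x : { x : F // x ∈ H }, g'.eval x.1 = w' x) ∧
      (∀ β : { β : F // β ∉ H }, (fun j => V' (β, j)) ∈ E' (g'.eval β.1))) :
    c / 4 ^ (ℓ + 1) * (((Fintype.card F - H.card : ℕ) : ℝ) * m)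
      ≤ (hammingDist V V' : ℝ) := by
  obtain ⟨g, hg, hgw, hgV⟩ := hV
  obtain ⟨g', hg', hgw', hgV'⟩ := hV'
  set q := Fintype.card F with hq
  have hgg' : g ≠ g' := by
    rintro rfl
    exact hww' (funext fun x => ((hgw x).symm.trans (hgw' x)))
  have hsub : g - g' ≠ 0 := sub_ne_zero.mpr hgg'
  set T : Finset {β : F // β ∉ H} := Finset.univ with hT
  set S : Finset {β : F // β ∉ H} :=
    Finset.univ.filter (fun β => ¬ g.eval β.1 = g'.eval β.1) with hSdef
  set A : Finset {β : F // β ∉ H} :=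
    Finset.univ.filter (fun β => g.eval β.1 = g'.eval β.1) with hAdef
  have hcardsub : Fintype.card {β : F // β ∉ H} = q - H.card := by
    have := Fintype.card_subtype_compl (fun x : F => x ∈ H)
    simpa [Fintype.card_subtype, hq] using this
  -- agreement bound: A injects into roots of g - g'
  have hAroots : A.card ≤ q / 2 := by
    have himg : A.image (fun β => β.1) ⊆ (g - g').roots.toFinset := by
      intro x hx
      simp only [Finset.mem_image] at hx
      obtain ⟨β, hβ, rfl⟩ := hx
      simp only [hAdef, Finset.mem_filter] at hβ
      simp [Multiset.mem_toFinset, Polynomial.mem_roots, hsub, Polynomial.IsRoot,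
        Polynomial.eval_sub, sub_eq_zero, hβ.2]
    have h1 : A.card = (A.image (fun β => β.1)).card :=
      (Finset.card_image_of_injective _ Subtype.val_injective).symm
    have h2 : (A.image (fun β => β.1)).card ≤ (g - g').roots.toFinset.card :=
      Finset.card_le_card himg
    have h3 : (g - g').roots.toFinset.card ≤ (g - g').roots.card :=
      Multiset.toFinset_card_le _
    have h4 : ((g - g').roots.card : ℕ) ≤ (g - g').natDegree := by
      exact_mod_cast Polynomial.card_roots' (g - g')
    have h5 : (g - g').natDegree ≤ q / 2 :=
      le_trans (Polynomial.natDegree_sub_le g g') (max_le hg hg')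
    omega
  have hSA : S.card + A.card = q - H.card := by
    have h : A.card + S.card = Fintype.card {β : F // β ∉ H} := by
      rw [hAdef, hSdef, ← Finset.card_univ]
      convert Finset.card_filter_add_card_filter_not
        (s := (Finset.univ : Finset {β : F // β ∉ H}))
        (p := fun β => g.eval β.1 = g'.eval β.1) using 3
    rw [hcardsub] at h
    omega
  -- key cardinality bound: 4 * S.card ≥ q - H.card  (as naturals... use reals later)
  have hkq : H.card ≤ q := by omega
  have hScard : ((q - H.card : ℕ) : ℝ) ≤ 4 * S.card := by
    have h1 : (q : ℝ) / 2 + S.card + A.card ≤ (q : ℝ) / 2 + S.card + (q / 2 : ℕ) := by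
      have : (A.card : ℝ) ≤ ((q / 2 : ℕ) : ℝ) := by exact_mod_cast hAroots
      linarith
    have h2 : ((q / 2 : ℕ) : ℝ) ≤ (q : ℝ) / 2 := by
      have := Nat.cast_div_le (α := ℝ) (m := q) (n := 2)
      simpa using this
    have h3 : ((q - H.card : ℕ) : ℝ) = (S.card : ℝ) + A.card := by
      exact_mod_cast hSA.symm
    have h4 : (3 * H.card : ℝ) ≤ (q : ℝ) := by exact_mod_cast hH
    have h5 : ((q - H.card : ℕ) : ℝ) = (q : ℝ) - H.card := by
      have : (H.card : ℝ) ≤ q := by exact_mod_cast hkq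
      push_cast [Nat.cast_sub hkq]
      ring
    nlinarith
  -- split the hamming distance into rows
  have hsplit : (hammingDist V V' : ℕ) =
      ∑ β : {β : F // β ∉ H},
        hammingDist (fun j => V (β, j)) (fun j => V' (β, j)) := by
    simp only [hammingDist]
    rw [Finset.card_filter, Fintype.sum_prod_type]
    congr 1
    funext β
    rw [Finset.card_filter]
  -- lower bound each disagreeing row
  have hrow : ∀ β ∈ S, c / 4 ^ ℓ * m ≤
      ((hammingDist (fun j => V (β, j)) (fun j => V' (β, j)) : ℕ) : ℝ) := by
    intro β hβ
    simp only [hSdef, Finset.mem_filter] at hβ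
    exact hdist _ _ hβ.2 _ (hgV β) _ (hgV' β)
  have hsum : (S.card : ℝ) * (c / 4 ^ ℓ * m) ≤ (hammingDist V V' : ℝ) := by
    have h1 : (S.card : ℝ) * (c / 4 ^ ℓ * m) ≤
        ∑ β ∈ S, ((hammingDist (fun j => V (β, j)) (fun j => V' (β, j)) : ℕ) : ℝ) := by
      have := Finset.card_nsmul_le_sum S
        (fun β => ((hammingDist (fun j => V (β, j)) (fun j => V' (β, j)) : ℕ) : ℝ))
        (c / 4 ^ ℓ * m) hrow
      simpa [nsmul_eq_mul] using this
    have h2 : ∑ β ∈ S, ((hammingDist (fun j => V (β, j)) (fun j => V' (β, j)) : ℕ) : ℝ)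
        ≤ ∑ β : {β : F // β ∉ H},
            ((hammingDist (fun j => V (β, j)) (fun j => V' (β, j)) : ℕ) : ℝ) := by
      apply Finset.sum_le_sum_of_subset_of_nonneg (Finset.subset_univ S)
      intro i _ _
      positivity
    have h3 : (hammingDist V V' : ℝ) =
        ∑ β : {β : F // β ∉ H},
          ((hammingDist (fun j => V (β, j)) (fun j => V' (β, j)) : ℕ) : ℝ) := by
      exact_mod_cast congrArg (Nat.cast (R := ℝ)) hsplit
    linarith
  -- final arithmetic
  have h4pos : (0:ℝ) < 4 ^ ℓ := by positivity
  have hmain : c / 4 ^ (ℓ + 1) * (((q - H.card : ℕ) : ℝ) * m)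
      ≤ (S.card : ℝ) * (c / 4 ^ ℓ * m) := by
    have hm0 : (0:ℝ) ≤ (m:ℝ) := by positivity
    have : c / 4 ^ (ℓ + 1) * (((q - H.card : ℕ) : ℝ) * m)
        = (c / 4 ^ ℓ * m) * (((q - H.card : ℕ) : ℝ) / 4) := by
      rw [pow_succ]; field_simp
    rw [this]
    have hfac : (0:ℝ) ≤ c / 4 ^ ℓ * m := by positivity
    have : (((q - H.card : ℕ) : ℝ) / 4) ≤ (S.card : ℝ) := by linarith
    nlinarith
  exact le_trans hmain hsum
end

section
/- Suppose the level-(ℓ−1) code ensemble with parameters (F', k') satisfies: for every w' ∈ {0,1}^{k'} and every query set Q' of size at most q^{ℓ−1}, the restrictions to Q' of the distributions D_yes^{ℓ−1}(w') (uniform over E^{ℓ−1}(w')) and D_no^{ℓ−1} are identical. Then for every w ∈ {0,1}^k and every query set Q of size at most (|F∖H|/10)·q^{ℓ−1}, the restrictions to Q of D_yes^ℓ(w) and D_no^ℓ are identical, where D_yes^ℓ(w) samples a uniformly random degree ≤ |F|/2 polynomial g with g|_H = w and then independently a uniformly random element of E^{ℓ−1}(⟨g(β)⟩) for each β ∈ F∖H,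 and D_no^ℓ samples a uniformly random function λ : F∖H → F and then independently a uniformly random element of E^{ℓ−1}(⟨λ(β)⟩) for each β. -/
/-!
Call a block `β` big when `Q` reads more than `q'` of its coordinates. There are at most
`|F∖H| / 10` big blocks, so together with `H` they are at most `|F| / 2 + 1` points, and
evaluation of coefficient vectors of length `|F| / 2 + 1` at `H` and at the big blocks is a
surjective additive map (Lagrange interpolation). Its fibres therefore all have the same size,
so the values of the polynomial on the big blocks, conditioned on `g|_H = w`, are uniform, as
the values of a uniform `λ` are. On a small block the hypothesis makes the queried marginal of
`Dyes' c` independent of `c`, so the queried view depends only on the values on big blocks.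
-/

open scoped Classical

noncomputable def pmfPi {ι α : Type} [Fintype ι] [DecidableEq ι] [Fintype α]
    (p : ι → PMF α) : PMF (ι → α) :=
  PMF.ofFintype (fun f => ∏ i, p i (f i)) (by
    rw [← Fintype.prod_sum (fun (i : ι) (a : α) => p i a)]
    have h1 : ∀ i : ι, ∑ a : α, p i a = 1 := fun i => by
      rw [← tsum_fintype (L := SummationFilter.unconditional α)]; exact (p i).tsum_coe
    simp [h1])

open Finset

namespace PMF

theorem bind_eq_bind_of_map_eq {α β γ : Type*} {p p' : PMF α} (r : α → β) {k : α → PMF γ}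
    (hk : ∀ a b, r a = r b → k a = k b) (h : p.map r = p'.map r) : p.bind k = p'.bind k := by
  obtain ⟨a₀, -⟩ := p.support_nonempty
  let k' : β → PMF γ := fun b => if hb : ∃ a, r a = b then k hb.choose else k a₀
  have hk' : k = k' ∘ r := funext fun a => by
    have hex : ∃ a', r a' = r a := ⟨a, rfl⟩
    simp only [Function.comp_apply, k', dif_pos hex]
    exact hk _ _ hex.choose_spec.symm
  rw [hk', ← bind_map, ← bind_map, h]

theorem map_uniformOfFintype_eq_of_card_fiber {α β : Type*} [Fintype α] [Nonempty α]
    [Fintype β] [Nonempty β] [DecidableEq β] (g : α → β)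
    (hg : ∀ b b', #{a | g a = b} = #{a | g a = b'}) :
    (uniformOfFintype α).map g = uniformOfFintype β := by
  ext b
  have hcard : Fintype.card α = Fintype.card β * #{a | g a = b} := by
    rw [← card_univ, card_eq_sum_card_fiberwise (fun a _ => mem_univ (g a))]
    simp only [hg _ b, sum_const, card_univ, smul_eq_mul]
  have hfiber : (#{a | g a = b} : ENNReal) ≠ 0 := by
    have := Fintype.card_ne_zero (α := α)
    rw [hcard] at this
    exact_mod_cast right_ne_zero_of_mul this
  simp only [map_apply, tsum_fintype, uniformOfFintype_apply, eq_comm (a := b)]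
  rw [sum_ite, sum_const_zero, add_zero, sum_const, nsmul_eq_mul, hcard, Nat.cast_mul,
    ENNReal.mul_inv (by simp) (by simp), mul_comm, mul_assoc,
    ENNReal.inv_mul_cancel hfiber (by simp), mul_one]

theorem map_uniformOfFintype_of_surjective {G A V : Type*} [AddGroup A] [Fintype A]
    [AddGroup V] [Fintype V] [DecidableEq V] [FunLike G A V] [AddMonoidHomClass G A V] (f : G)
    (hf : Function.Surjective f) :
    (uniformOfFintype A).map f = uniformOfFintype V :=
  map_uniformOfFintype_eq_of_card_fiber f fun v v' =>
    AddMonoidHom.card_fiber_eq_of_mem_range f (hf v) (hf v')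

theorem map_uniformOfFintype_fiber {A W V : Type*} [AddGroup A] [Fintype A] [AddGroup W]
    [DecidableEq W] [AddGroup V] [Fintype V] [DecidableEq V] (f : A →+ W) (g : A →+ V)
    (hfg : Function.Surjective (f.prod g)) (P : A → Prop) [Fintype {a // P a}]
    [Nonempty {a // P a}] (w : W) (hP : ∀ a, P a ↔ f a = w) :
    (uniformOfFintype {a // P a}).map (fun a => g a.1) = uniformOfFintype V := by
  refine map_uniformOfFintype_eq_of_card_fiber _ fun v v' => ?_
  have hfiber (v : V) : #{a : {a // P a} | g a = v} = #{a | f.prod g a = (w, v)} := by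
    rw [← Fintype.card_subtype, ← Fintype.card_subtype]
    refine Fintype.card_congr ((Equiv.subtypeSubtypeEquivSubtypeInter P (g · = v)).trans
      (Equiv.subtypeEquivRight fun a => ?_))
    rw [hP, AddMonoidHom.prod_apply, Prod.ext_iff]
  rw [hfiber, hfiber]
  exact AddMonoidHom.card_fiber_eq_of_mem_range _ (hfg _) (hfg _)

end PMF

def evalCoeffs {F ι : Type*} [Semiring F] (n : ℕ) (s : ι → F) : (Fin n → F) →+ (ι → F) where
  toFun a i := ∑ j, a j * s i ^ (j : ℕ)
  map_zero' := by ext; simp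
  map_add' a b := by ext; simp [add_mul, sum_add_distrib]

theorem evalCoeffs_surjective {F ι : Type*} [Field F] [Fintype ι] {n : ℕ} {s : ι → F}
    (hs : Function.Injective s) (hn : Fintype.card ι ≤ n) :
    Function.Surjective (evalCoeffs n s) := by
  intro u
  set p := Lagrange.interpolate (univ.image s) id (Function.extend s u 0)
  have hdeg : p.degree < n := by
    calc p.degree < #(univ.image s) :=
          Lagrange.degree_interpolate_lt _ Function.injective_id.injOn
      _ ≤ n := by
          rw [card_image_of_injective _ hs]
          exact_mod_cast hn
  refine ⟨fun j => p.coeff j, funext fun i => ?_⟩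
  change ∑ j : Fin n, p.coeff j * s i ^ (j : ℕ) = u i
  rw [Polynomial.sum_fin (fun j c => c * s i ^ j) (fun _ => zero_mul _) hdeg,
    ← Polynomial.eval_eq_sum]
  exact (Lagrange.eval_interpolate_at_node _ Function.injective_id.injOn
      (mem_image_of_mem s (mem_univ i))).trans (hs.extend_apply u 0 i)

theorem evalCoeffs_prod_surjective {F ι κ : Type*} [Field F] [Fintype ι] [Fintype κ] {n : ℕ}
    {s : ι → F} {t : κ → F} (hst : Function.Injective (Sum.elim s t))
    (hn : Fintype.card ι + Fintype.card κ ≤ n) :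
    Function.Surjective ((evalCoeffs n s).prod (evalCoeffs n t)) := by
  rintro ⟨u, v⟩
  obtain ⟨a, ha⟩ := evalCoeffs_surjective (n := n) hst (by rwa [Fintype.card_sum]) (Sum.elim u v)
  exact ⟨a, Prod.ext (funext fun i => congrFun ha (.inl i)) (funext fun i => congrFun ha (.inr i))⟩

theorem pmfPi_apply {ι α : Type} [Fintype ι] [DecidableEq ι] [Fintype α] (p : ι → PMF α)
    (v : ι → α) : pmfPi p v = ∏ i, p i (v i) :=
  PMF.ofFintype_apply _ _

section Blocks

variable {ι κ : Type} [DecidableEq ι] [Fintype κ] [DecidableEq κ]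

def blockQuery (Q : Finset (ι × κ)) (β : ι) : Finset κ := {j | (β, j) ∈ Q}

theorem mem_blockQuery {Q : Finset (ι × κ)} {β : ι} {j : κ} :
    j ∈ blockQuery Q β ↔ (β, j) ∈ Q := by
  simp [blockQuery]

variable [Fintype ι]

def bigBlocks (Q : Finset (ι × κ)) (q : ℕ) : Finset ι := {β | q < #(blockQuery Q β)}

theorem sum_card_blockQuery (Q : Finset (ι × κ)) : ∑ β, #(blockQuery Q β) = #Q := by
  simp only [blockQuery, card_filter]
  rw [← Fintype.sum_prod_type', ← card_filter]
  simp

theorem card_bigBlocks_mul_le (Q : Finset (ι × κ)) (q : ℕ) :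
    #(bigBlocks Q q) * (q + 1) ≤ #Q := by
  calc #(bigBlocks Q q) * (q + 1) ≤ ∑ β ∈ bigBlocks Q q, #(blockQuery Q β) := by
        rw [← smul_eq_mul]
        exact card_nsmul_le_sum _ _ _ fun β hβ => by simpa [bigBlocks] using hβ
    _ ≤ ∑ β, #(blockQuery Q β) := sum_le_sum_of_subset (subset_univ _)
    _ = #Q := sum_card_blockQuery Q

theorem mul_card_bigBlocks_le {Q : Finset (ι × κ)} {q N c : ℕ} (hc : 0 < c)
    (hQ : (#Q : ℝ) ≤ N / c * q) : c * #(bigBlocks Q q) ≤ N := by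
  have hcount : (#(bigBlocks Q q) : ℝ) * (q + 1) ≤ N / c * (q + 1) :=
    calc (#(bigBlocks Q q) : ℝ) * (q + 1) ≤ #Q := by exact_mod_cast card_bigBlocks_mul_le Q q
      _ ≤ N / c * q := hQ
      _ ≤ N / c * (q + 1) := by gcongr; linarith
  have := le_of_mul_le_mul_right hcount (by positivity)
  rw [le_div_iff₀ (by exact_mod_cast hc)] at this
  exact_mod_cast (by linarith : (c : ℝ) * #(bigBlocks Q q) ≤ N)

theorem map_restrict_pmfPi_apply {α : Type} [Fintype α] (p : ι → PMF (κ → α))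
    (Q : Finset (ι × κ)) (y : Q → α) :
    (pmfPi p).map (fun v (x : Q) => v x.1.1 x.1.2) y
      = ∏ β, (p β).map (fun u (j : blockQuery Q β) => u j.1)
          (fun j => y ⟨(β, j.1), mem_blockQuery.1 j.2⟩) := by
  have hy (v : ι → κ → α) : y = (fun x : Q => v x.1.1 x.1.2)
      ↔ ∀ β, (fun j : blockQuery Q β => y ⟨(β, j.1), mem_blockQuery.1 j.2⟩)
        = fun j => v β j.1 := by
    simp only [funext_iff, Subtype.forall, mem_blockQuery, Prod.forall]
  simp only [PMF.map_apply, tsum_fintype, Fintype.prod_sum, hy, pmfPi_apply]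
  exact sum_congr rfl fun v _ => by classical convert Fintype.prod_ite_zero.symm

theorem map_restrict_pmfPi_congr {α : Type} [Fintype α] {p p' : ι → PMF (κ → α)}
    (Q : Finset (ι × κ))
    (h : ∀ β, (p β).map (fun u (j : blockQuery Q β) => u j.1)
      = (p' β).map (fun u (j : blockQuery Q β) => u j.1)) :
    (pmfPi p).map (fun v (x : Q) => v x.1.1 x.1.2)
      = (pmfPi p').map (fun v (x : Q) => v x.1.1 x.1.2) :=
  PMF.ext fun y => by simp only [map_restrict_pmfPi_apply, h]

theorem map_restrict_pmfPi_eq_of_eqOn_bigBlocks {γ α : Type} [Fintype α]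
    {D : γ → PMF (κ → α)} {D₀ : PMF (κ → α)} {Q : Finset (ι × κ)} {q : ℕ}
    (hD : ∀ c (Q' : Finset κ), #Q' ≤ q →
      (D c).map (fun u (j : Q') => u j.1) = D₀.map (fun u (j : Q') => u j.1))
    {lam mu : ι → γ} (h : ∀ β ∈ bigBlocks Q q, lam β = mu β) :
    (pmfPi fun β => D (lam β)).map (fun v (x : Q) => v x.1.1 x.1.2)
      = (pmfPi fun β => D (mu β)).map (fun v (x : Q) => v x.1.1 x.1.2) := by
  refine map_restrict_pmfPi_congr Q fun β => ?_
  by_cases hβ : β ∈ bigBlocks Q q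
  · rw [h β hβ]
  · have hβ : #(blockQuery Q β) ≤ q := by simpa [bigBlocks] using hβ
    rw [hD _ _ hβ, hD _ _ hβ]

end Blocks

/-- the hybrid lemma for the iterated ensemble: Suppose the level-`(ℓ−1)`
distributions satisfy: for every encoded value `a : F` and every query set `Q'` of at most
`q'` coordinates, the restriction of `Dyes' a` (uniform over level-`(ℓ−1)` encodings of
`a`) to `Q'` and the restriction of `Dno'` to `Q'` are identical.  Let the level-`ℓ`
yes-distribution for `w : H → F` pick a uniformly random polynomial of degree `≤ |F|/2`
(given by its coefficient vector) agreeing with `w` on `H` and then sample each block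
`β ∈ F∖H` independently from `Dyes' (g(β))`, and let the level-`ℓ` no-distribution pick
a uniformly random `λ : F∖H → F` and sample each block from `Dyes' (λ(β))`.  Then for
every query set `Q` of size at most `(|F∖H|/10)·q'`, the restrictions to `Q` of the two
level-`ℓ` distributions are identical. -/
theorem stmt14 (F : Type) [Field F] [Fintype F] [DecidableEq F]
    (H : Finset F) (hH : 3 * H.card ≤ Fintype.card F)
    (m q' : ℕ)
    (Dyes' : F → PMF (Fin m → Bool)) (Dno' : PMF (Fin m → Bool))
    (hblock : ∀ a : F, ∀ Q' : Finset (Fin m), Q'.card ≤ q' →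
      PMF.map (fun x => fun j : { j : Fin m // j ∈ Q' } => x j.1) (Dyes' a)
        = PMF.map (fun x => fun j : { j : Fin m // j ∈ Q' } => x j.1) Dno')
    (w : { x : F // x ∈ H } → F)
    (hne : Nonempty { a : Fin (Fintype.card F / 2 + 1) → F //
      ∀ x : { x : F // x ∈ H }, ∑ i, a i * (x.1 : F) ^ (i : ℕ) = w x })
    (Q : Finset ({ β : F // β ∉ H } × Fin m))
    (hQ : (Q.card : ℝ) ≤ ((Fintype.card F - H.card : ℕ) : ℝ) / 10 * q') :
    PMF.map (fun v : { β : F // β ∉ H } → Fin m → Bool =>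
        fun x : { x : { β : F // β ∉ H } × Fin m // x ∈ Q } => v x.1.1 x.1.2)
      ((@PMF.uniformOfFintype
          { a : Fin (Fintype.card F / 2 + 1) → F //
            ∀ x : { x : F // x ∈ H }, ∑ i, a i * (x.1 : F) ^ (i : ℕ) = w x } _ hne).bind
        (fun a => pmfPi (fun β : { β : F // β ∉ H } =>
          Dyes' (∑ i, a.1 i * (β.1 : F) ^ (i : ℕ)))))
    = PMF.map (fun v : { β : F // β ∉ H } → Fin m → Bool =>
        fun x : { x : { β : F // β ∉ H } × Fin m // x ∈ Q } => v x.1.1 x.1.2)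
      ((PMF.uniformOfFintype ({ β : F // β ∉ H } → F)).bind
        (fun lam => pmfPi (fun β : { β : F // β ∉ H } => Dyes' (lam β)))) := by
  set B := bigBlocks Q q'
  have hB : #H + #B ≤ Fintype.card F / 2 + 1 := by
    have : 10 * #B ≤ Fintype.card F - #H :=
      mul_card_bigBlocks_le (by norm_num) (by exact_mod_cast hQ)
    have := H.card_le_univ
    omega
  have hsurj := evalCoeffs_prod_surjective (n := Fintype.card F / 2 + 1)
    (s := (Subtype.val : H → F)) (t := fun β : B => β.1.1)
    (Subtype.val_injective.sumElim (Subtype.val_injective.comp Subtype.val_injective)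
      fun x β h => β.1.2 (h ▸ x.2)) (by simpa using hB)
  let restrictB := LinearMap.funLeft F F (Subtype.val : B → { β : F // β ∉ H })
  let view : ({ β : F // β ∉ H } → F) → PMF (Q → Bool) := fun lam =>
    (pmfPi fun β => Dyes' (lam β)).map fun v x => v x.1.1 x.1.2
  have hview (lam mu : { β : F // β ∉ H } → F) (h : restrictB lam = restrictB mu) :
      view lam = view mu :=
    map_restrict_pmfPi_eq_of_eqOn_bigBlocks hblock fun β hβ => congrFun h ⟨β, hβ⟩
  have hyes_factor := PMF.bind_map (@PMF.uniformOfFintype _ _ hne)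
    (fun a => evalCoeffs _ (fun β : { β : F // β ∉ H } => β.1) a.1) view
  rw [PMF.map_bind, PMF.map_bind]
  refine hyes_factor.symm.trans (PMF.bind_eq_bind_of_map_eq restrictB hview ?_)
  rw [PMF.map_comp, PMF.map_uniformOfFintype_of_surjective restrictB
    (LinearMap.funLeft_surjective_of_injective _ _ _ Subtype.val_injective)]
  exact PMF.map_uniformOfFintype_fiber _ _ hsurj _ w fun a => funext_iff.symm
end
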